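/- Let (A, C) = σ(A', C') be a simple state in an AMG and D ⊆ 𝔻 a set of MTD defenses. Then T(P(C) ∩ N_∅) = T(P(C \ ⋃_{d∈D} δ(d)) ∩ N_∅): removing all nodes defended by defenses in D from C does not change the completed descendants of checkpoints. -/

import Mathlib

/-- An Attack-MTD DAG (AMG): nodes `N`, defenses `D`, an edge relation,
a root, a predicate marking subgoals (inner nodes), a refinement
(`conj g = True` means `∧`, `False` means `∨`), and for each defense the
set of nodes it defends. -/
structure AMG (N : Type) (D : Type) where
  edge : N → N → Prop
  root : N
  subgoal : N → Prop
  conj : N → Prop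
  defended : D → Set N

namespace AMG

variable {N D : Type} (T : AMG N D)

/-- One propagation step: add every subgoal whose refinement condition holds. -/
def step (M : Set N) : Set N :=
  M ∪ {g | T.subgoal g ∧
    ((T.conj g ∧ ∀ n, T.edge g n → n ∈ M) ∨ (¬ T.conj g ∧ ∃ n, T.edge g n ∧ n ∈ M))}

/-- Propagation operator: least fixed point of `step` above `C`. -/
def prop (C : Set N) : Set N := sInf {F | C ⊆ F ∧ T.step F = F}

/-- `l` is a directed path starting at the root and ending at a parent of `n`. -/
def rootPathTo (n : N) (l : List N) : Prop :=
  l.head? = some T.root ∧ List.Chain' T.edge l ∧ ∃ p, l.getLast? = some p ∧ T.edge p n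

/-- Completed descendants: nodes having at least one root-to-parent path, all of
whose root-to-parent paths meet `C`. -/
def cdesc (C : Set N) : Set N :=
  {n | (∃ l, T.rootPathTo n l) ∧ ∀ l, T.rootPathTo n l → ∃ g ∈ l, g ∈ C}

/-- Undefended nodes `N_∅`. -/
def undef : Set N := {n | ∀ d, n ∉ T.defended d}

/-- Pruning operator `R`. -/
def prune (s : Set N × Set N) : Set N × Set N :=
  (s.1 \ (T.cdesc (s.2 ∩ T.undef) ∪ s.2), s.2 \ T.cdesc (s.2 ∩ T.undef))

/-- Simple state `σ`. -/
def sstate (s : Set N × Set N) : Set N × Set N := T.prune (s.1, T.prop s.2)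

/-- Atomic attacks: the leaves of the DAG. -/
def atomic : Set N := {n | ∀ m, ¬ T.edge n m}

/-- Two states are equivalent iff they have the same simple state. -/
def stSetoid : Setoid (Set N × Set N) :=
  ⟨fun s t => T.sstate s = T.sstate t, ⟨fun _ => rfl, fun h => h.symm, fun h₁ h₂ => h₁.trans h₂⟩⟩

/-- Locations: equivalence classes of states. -/
def Loc := Quotient T.stSetoid

/-- Canonical representative of a location: the common simple state. -/
def rep (ℓ : T.Loc) : Set N × Set N :=
  Quotient.lift T.sstate (fun _ _ h => h) ℓ

/-- Set difference on locations: `ℓ \ (a, b)`. -/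
def locDiff (ℓ : T.Loc) (a b : Set N) : T.Loc :=
  Quotient.mk T.stSetoid ((T.rep ℓ).1 \ a, (T.rep ℓ).2 \ b)

/-- `d₂` follows `d₁` : `d₁ ▷ d₂`. -/
def follows (d₁ d₂ : D) : Prop :=
  ∃ n₁ ∈ T.defended d₁, ∃ n₂, T.edge n₁ n₂ ∧ n₂ ∉ T.defended d₁ ∧ n₂ ∈ T.defended d₂

end AMG

/-!
Write `K = P(C') ∩ N_∅`, so that `C = P(C') \ T(K)` and `P(C) ⊆ P(C')`. A node of `K \ T(K)`
lies in `C` and, being undefended, in `C \ ⋃ δ(d)`. If the root is not in `K`, every root path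
meeting `K` meets `K \ T(K)`: walk back from a hit in `T(K)` to an earlier hit until it is
not in `T(K)`. If the root is in `K`, every reachable node is in `T(K)`, so `C` contains no
reachable node; as the reachable nodes are closed under edges, propagation restricted to them
only sees them, and the reachable part of `P(C)` already lies in `P(∅)`.
-/

namespace AMG

variable {N D : Type} (T : AMG N D)

section Propagation

lemma step_mono {M M' : Set N} (h : M ⊆ M') : T.step M ⊆ T.step M' := by
  rintro g (hg | ⟨hsub, ⟨hconj, hall⟩ | ⟨hconj, n, hgn, hn⟩⟩)
  · exact Or.inl (h hg)
  · exact Or.inr ⟨hsub, Or.inl ⟨hconj, fun n hgn => h (hall n hgn)⟩⟩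
  · exact Or.inr ⟨hsub, Or.inr ⟨hconj, n, hgn, h hn⟩⟩

lemma subset_step (M : Set N) : M ⊆ T.step M := Set.subset_union_left

/-- `step` only looks at children, which stay inside an edge-closed set. -/
lemma step_inter_subset {R : Set N} (hR : ∀ ⦃n m⦄, n ∈ R → T.edge n m → m ∈ R) (M : Set N) :
    T.step M ∩ R ⊆ T.step (M ∩ R) := by
  rintro g ⟨hg | ⟨hsub, ⟨hconj, hall⟩ | ⟨hconj, n, hgn, hn⟩⟩, hgR⟩
  · exact Or.inl ⟨hg, hgR⟩
  · exact Or.inr ⟨hsub, Or.inl ⟨hconj, fun n hgn => ⟨hall n hgn, hR hgR hgn⟩⟩⟩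
  · exact Or.inr ⟨hsub, Or.inr ⟨hconj, n, hgn, hn, hR hgR hgn⟩⟩

lemma prop_subset_of_step_subset {C F : Set N} (hCF : C ⊆ F) (hF : T.step F ⊆ F) :
    T.prop C ⊆ F :=
  sInf_le ⟨hCF, hF.antisymm (T.subset_step F)⟩

lemma subset_prop (C : Set N) : C ⊆ T.prop C :=
  le_sInf fun _ hF => hF.1

lemma step_prop (C : Set N) : T.step (T.prop C) = T.prop C :=
  (le_sInf fun _ hF => (T.step_mono (sInf_le hF)).trans hF.2.le).antisymm (T.subset_step _)

lemma prop_subset_prop {C C' : Set N} (h : C ⊆ T.prop C') : T.prop C ⊆ T.prop C' :=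
  T.prop_subset_of_step_subset h (T.step_prop C').le

lemma prop_mono {C C' : Set N} (h : C ⊆ C') : T.prop C ⊆ T.prop C' :=
  T.prop_subset_prop (h.trans (T.subset_prop C'))

lemma prop_inter_subset_prop_inter {R : Set N} (hR : ∀ ⦃n m⦄, n ∈ R → T.edge n m → m ∈ R)
    (C : Set N) : T.prop C ∩ R ⊆ T.prop (C ∩ R) := by
  set W := (T.prop C \ R) ∪ T.prop (C ∩ R)
  have hWR : W ∩ R ⊆ T.prop (C ∩ R) := by
    rintro g ⟨⟨_, hgR⟩ | hg, hgR'⟩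
    exacts [absurd hgR' hgR, hg]
  have hCW : C ⊆ W := fun c hc => by
    by_cases hcR : c ∈ R
    exacts [Or.inr (T.subset_prop _ ⟨hc, hcR⟩), Or.inl ⟨T.subset_prop _ hc, hcR⟩]
  have hWC : W ⊆ T.prop C :=
    Set.union_subset Set.sdiff_subset (T.prop_mono Set.inter_subset_left)
  have hstepW : T.step W ⊆ W := fun g hg => by
    by_cases hgR : g ∈ R
    · right
      rw [← T.step_prop]
      exact T.step_mono hWR (T.step_inter_subset hR W ⟨hg, hgR⟩)
    · exact Or.inl ⟨T.step_prop C ▸ T.step_mono hWC hg, hgR⟩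
  exact fun g hg => hWR ⟨T.prop_subset_of_step_subset hCW hstepW hg.1, hg.2⟩

end Propagation

section Paths

/-- The root is reachable only if it lies on a cycle. -/
def reachable : Set N := {n | ∃ l, T.rootPathTo n l}

variable {T}

lemma rootPathTo.append_singleton {n m : N} {l : List N} (hl : T.rootPathTo n l)
    (hnm : T.edge n m) : T.rootPathTo m (l ++ [n]) := by
  obtain ⟨hhead, hchain, p, hlast, hpn⟩ := hl
  refine ⟨?_, hchain.append (List.isChain_singleton n) ?_, n, by simp, hnm⟩
  · rwa [List.head?_append_of_ne_nil _ (List.ne_nil_of_mem (List.mem_of_mem_head? hhead))]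
  · simpa [hlast] using hpn

lemma rootPathTo.of_append_singleton {n p : N} {s : List N} (hl : T.rootPathTo n (s ++ [p]))
    (hs : s ≠ []) : T.rootPathTo p s := by
  obtain ⟨hhead, hchain, -⟩ := hl
  obtain ⟨hchain, -, hlast⟩ := List.isChain_append.1 hchain
  obtain ⟨q, hq⟩ := Option.ne_none_iff_exists'.1 (mt List.getLast?_eq_none_iff.1 hs)
  exact ⟨by rwa [List.head?_append_of_ne_nil _ hs] at hhead, hchain, q, hq, hlast q hq p rfl⟩

lemma rootPathTo.eq_root_of_singleton {n p : N} (hl : T.rootPathTo n [p]) : p = T.root := by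
  simpa using hl.1

lemma rootPathTo.root_mem {n : N} {l : List N} (hl : T.rootPathTo n l) : T.root ∈ l :=
  List.mem_of_mem_head? hl.1

variable (T)

lemma mem_reachable_of_edge ⦃n m : N⦄ (hn : n ∈ T.reachable) (hnm : T.edge n m) :
    m ∈ T.reachable :=
  let ⟨l, hl⟩ := hn
  ⟨l ++ [n], hl.append_singleton hnm⟩

lemma undef_subset_compl_biUnion_defended (Ds : Set D) :
    T.undef ⊆ (⋃ d ∈ Ds, T.defended d)ᶜ := fun n hn => by
  simpa using fun d _ => hn d

lemma cdesc_mono {Y Y' : Set N} (h : Y ⊆ Y') : T.cdesc Y ⊆ T.cdesc Y' :=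
  fun _ hn => ⟨hn.1, fun l hl => (hn.2 l hl).imp fun _ => And.imp_right (@h _)⟩

lemma reachable_subset_cdesc {Y : Set N} (hY : T.root ∈ Y) : T.reachable ⊆ T.cdesc Y :=
  fun _ hn => ⟨hn, fun _ hl => ⟨T.root, hl.root_mem, hY⟩⟩

/-- Walking back along a root path: a node of `Y` hit by the path is either outside
`T.cdesc Y`, or the part of the path before it hits `Y` again. -/
lemma exists_mem_of_rootPathTo {Y Z : Set N} (hroot : T.root ∉ Y) (hYZ : Y \ T.cdesc Y ⊆ Z)
    {n : N} {l : List N} (hl : T.rootPathTo n l) (hlY : ∃ g ∈ l, g ∈ Y) : ∃ g ∈ l, g ∈ Z := by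
  induction l using List.reverseRecOn generalizing n with
  | nil => simp at hlY
  | append_singleton s p ih =>
    have of_mem_s : ∀ g ∈ s, g ∈ Y → ∃ g ∈ s ++ [p], g ∈ Z := fun g hg hgY =>
      (ih (hl.of_append_singleton (List.ne_nil_of_mem hg)) ⟨g, hg, hgY⟩).imp
        fun _ => And.imp_left (List.mem_append_left _)
    obtain ⟨g, hg, hgY⟩ := hlY
    rcases List.mem_append.1 hg with hg | hg
    · exact of_mem_s g hg hgY
    · rw [List.mem_singleton] at hg
      subst hg
      by_cases hgE : g ∈ T.cdesc Y
      · have hs : s ≠ [] := fun hs => hroot ((hs ▸ hl).eq_root_of_singleton ▸ hgY)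
        obtain ⟨b, hb, hbY⟩ := hgE.2 s (hl.of_append_singleton hs)
        exact of_mem_s b hb hbY
      · exact ⟨g, by simp, hYZ ⟨hgY, hgE⟩⟩

lemma cdesc_subset_cdesc_of_diff_subset {Y Z : Set N} (hroot : T.root ∉ Y)
    (hYZ : Y \ T.cdesc Y ⊆ Z) : T.cdesc Y ⊆ T.cdesc Z :=
  fun _ hn => ⟨hn.1, fun _ hl => T.exists_mem_of_rootPathTo hroot hYZ hl (hn.2 _ hl)⟩

end Paths

end AMG

/-- If `(A, C) = σ (A', C')` is a simple state and `Ds` is a set of defenses, then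
removing all nodes defended by defenses in `Ds` from `C` does not change the
completed descendants of the checkpoints:
`T(P(C) ∩ N_∅) = T(P(C \ ⋃_{d ∈ Ds} δ(d)) ∩ N_∅)`. -/
theorem stmt8 {N D : Type} (T : AMG N D) (A' C' A C : Set N) (Ds : Set D)
    (h : (A, C) = T.sstate (A', C')) :
    T.cdesc (T.prop C ∩ T.undef) =
      T.cdesc (T.prop (C \ ⋃ d ∈ Ds, T.defended d) ∩ T.undef) := by
  set S := ⋃ d ∈ Ds, T.defended d
  set K := T.prop C' ∩ T.undef
  have hC : C = T.prop C' \ T.cdesc K := congrArg Prod.snd h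
  have hCK : T.prop C ⊆ T.prop C' := T.prop_subset_prop (hC ▸ Set.sdiff_subset)
  have hKX : K \ T.cdesc K ⊆ T.prop (C \ S) ∩ T.undef := fun g ⟨⟨hgK, hgU⟩, hgE⟩ =>
    ⟨T.subset_prop _ ⟨hC ▸ ⟨hgK, hgE⟩, T.undef_subset_compl_biUnion_defended Ds hgU⟩, hgU⟩
  refine (T.cdesc_mono (Set.inter_subset_inter_left _ (T.prop_mono Set.sdiff_subset))).antisymm' ?_
  by_cases hroot : T.root ∈ K
  · have hCR : C ∩ T.reachable ⊆ C \ S := fun c ⟨hc, hcR⟩ =>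
      absurd (T.reachable_subset_cdesc hroot hcR) (hC ▸ hc).2
    refine T.cdesc_mono fun g ⟨hg, hgU⟩ => ?_
    by_cases hgR : g ∈ T.reachable
    · exact ⟨T.prop_mono hCR (T.prop_inter_subset_prop_inter T.mem_reachable_of_edge C ⟨hg, hgR⟩),
        hgU⟩
    · exact hKX ⟨⟨hCK hg, hgU⟩, fun hgE => hgR hgE.1⟩
  · exact (T.cdesc_mono (Set.inter_subset_inter_left _ hCK)).trans
      (T.cdesc_subset_cdesc_of_diff_subset hroot hKX)
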